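/- The graph NCG(18n³) is connected. -/

import Mathlib

/-- The group `K = (ZMod n)³ ⋊ Z₃`, where the generator of `Z₃` acts on `(ZMod n)³`
by scalar multiplication by `r`.  An element is a pair `⟨v, t⟩` with
`v ∈ (ZMod n)³` and `t ∈ ZMod 3`; multiplication is
`⟨v, i⟩ * ⟨w, j⟩ = ⟨r^j • v + w, i + j⟩`, so that with `a = ⟨(1,0,0),0⟩`,
`b = ⟨(0,1,0),0⟩`, `c = ⟨(0,0,1),0⟩`, `h = ⟨0,1⟩` the presentation
`aⁿ = bⁿ = cⁿ = h³ = [a,b] = [a,c] = [b,c] = 1`, `h⁻¹ah = a^r`, `h⁻¹bh = b^r`,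
`h⁻¹ch = c^r` holds. -/
@[ext]
structure Kgrp (n : ℕ) (r : ZMod n) (hr : r ^ 2 + r + 1 = 0) : Type where
  v : ZMod n × ZMod n × ZMod n
  t : ZMod 3

namespace Kgrp

variable {n : ℕ} {r : ZMod n} {hr : r ^ 2 + r + 1 = 0}

instance : Mul (Kgrp n r hr) :=
  ⟨fun x y => ⟨(r ^ y.t.val) • x.v + y.v, x.t + y.t⟩⟩

instance : One (Kgrp n r hr) := ⟨⟨0, 0⟩⟩

instance : Inv (Kgrp n r hr) :=
  ⟨fun x => ⟨-((r ^ (-x.t).val) • x.v), -x.t⟩⟩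

@[simp] lemma mul_def (x y : Kgrp n r hr) :
    x * y = ⟨(r ^ y.t.val) • x.v + y.v, x.t + y.t⟩ := rfl

@[simp] lemma one_def : (1 : Kgrp n r hr) = ⟨0, 0⟩ := rfl

@[simp] lemma inv_def (x : Kgrp n r hr) :
    x⁻¹ = ⟨-((r ^ (-x.t).val) • x.v), -x.t⟩ := rfl

lemma r_cube (hr : r ^ 2 + r + 1 = 0) : r ^ 3 = 1 := by
  linear_combination (r - 1) * hr

lemma r_pow_val_add (hr : r ^ 2 + r + 1 = 0) (i j : ZMod 3) :
    r ^ i.val * r ^ j.val = r ^ (i + j).val := by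
  have h3 : r ^ 3 = 1 := r_cube hr
  have hval : (i + j).val = (i.val + j.val) % 3 := ZMod.val_add i j
  rw [hval, ← pow_add]
  conv_lhs => rw [← Nat.mod_add_div (i.val + j.val) 3]
  rw [pow_add, pow_mul, h3, one_pow, mul_one]

instance : Group (Kgrp n r hr) :=
  Group.ofLeftAxioms
    (fun x y z => by
      have hs : r ^ z.t.val * r ^ y.t.val = r ^ (y.t + z.t).val := by
        rw [r_pow_val_add hr, add_comm]
      refine Kgrp.ext ?_ ?_
      · show r ^ z.t.val • ((r ^ y.t.val) • x.v + y.v) + z.v =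
            r ^ (y.t + z.t).val • x.v + ((r ^ z.t.val) • y.v + z.v)
        rw [smul_add, smul_smul, hs, add_assoc]
      · show x.t + y.t + z.t = x.t + (y.t + z.t)
        exact add_assoc _ _ _)
    (fun x => by
      refine Kgrp.ext ?_ ?_
      · show r ^ x.t.val • (0 : ZMod n × ZMod n × ZMod n) + x.v = x.v
        rw [smul_zero, zero_add]
      · show 0 + x.t = x.t
        exact zero_add _)
    (fun x => by
      have hs : r ^ x.t.val * r ^ (-x.t).val = 1 := by
        rw [r_pow_val_add hr]
        simp
      refine Kgrp.ext ?_ ?_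
      · show r ^ x.t.val • (-(r ^ (-x.t).val • x.v)) + x.v = 0
        rw [smul_neg, smul_smul, hs, one_smul, neg_add_cancel]
      · show -x.t + x.t = 0
        exact neg_add_cancel _)

/-- The generator `a = ((1,0,0),0)` of `K`. -/
def gena (n : ℕ) (r : ZMod n) (hr : r ^ 2 + r + 1 = 0) : Kgrp n r hr := ⟨(1, 0, 0), 0⟩

/-- The generator `b = ((0,1,0),0)` of `K`. -/
def genb (n : ℕ) (r : ZMod n) (hr : r ^ 2 + r + 1 = 0) : Kgrp n r hr := ⟨(0, 1, 0), 0⟩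

/-- The generator `c = ((0,0,1),0)` of `K`. -/
def genc (n : ℕ) (r : ZMod n) (hr : r ^ 2 + r + 1 = 0) : Kgrp n r hr := ⟨(0, 0, 1), 0⟩

/-- The generator `h = ((0,0,0),1)` of `K`. -/
def genh (n : ℕ) (r : ZMod n) (hr : r ^ 2 + r + 1 = 0) : Kgrp n r hr := ⟨(0, 0, 0), 1⟩

end Kgrp

/-- The six base vertices `u, v, w, x, y, z` of `K₃,₃`. -/
inductive B6 : Type
  | u | v | w | x | y | z
deriving DecidableEq

open Kgrp in
/-- The (directed) edge relation of `NCG(18n³)` coming from the voltage assignment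
on `K₃,₃`: arcs go from `{u,v,w} × K` to `{x,y,z} × K` with the voltages
`1, 1, 1, h⁻¹b, 1, h, h⁻¹a, hc, 1`. -/
def ncgRel (n : ℕ) (r : ZMod n) (hr : r ^ 2 + r + 1 = 0)
    (p q : B6 × Kgrp n r hr) : Prop :=
  match p.1, q.1 with
  | .u, .x => q.2 = p.2
  | .u, .y => q.2 = p.2
  | .u, .z => q.2 = p.2
  | .v, .x => q.2 = p.2 * ((genh n r hr)⁻¹ * genb n r hr)
  | .v, .y => q.2 = p.2
  | .v, .z => q.2 = p.2 * genh n r hr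
  | .w, .x => q.2 = p.2 * ((genh n r hr)⁻¹ * gena n r hr)
  | .w, .y => q.2 = p.2 * (genh n r hr * genc n r hr)
  | .w, .z => q.2 = p.2
  | _, _ => False

/-- The graph `NCG(18n³)`: vertex set `{u,v,w,x,y,z} × K`, with edges
`{(u,g),(x,g)}`, `{(u,g),(y,g)}`, `{(u,g),(z,g)}`, `{(v,g),(x,g·h⁻¹·b)}`,
`{(v,g),(y,g)}`, `{(v,g),(z,g·h)}`, `{(w,g),(x,g·h⁻¹·a)}`, `{(w,g),(y,g·h·c)}`,
`{(w,g),(z,g)}` for `g ∈ K`. -/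
def NCG (n : ℕ) (r : ZMod n) (hr : r ^ 2 + r + 1 = 0) :
    SimpleGraph (B6 × Kgrp n r hr) where
  Adj p q := ncgRel n r hr p q ∨ ncgRel n r hr q p
  symm := ⟨fun p q hpq => hpq.symm⟩
  loopless := ⟨by
    rintro ⟨pb, pg⟩ hp
    cases pb <;> exact hp.elim id id⟩

/-! The derived graph of a voltage assignment in `G` is invariant under left multiplication in the
fibre coordinate, so the `g` with `(u, g)` reachable from `(u, 1)` form a subgroup of `G`. Lifting
the four fundamental cycles of `K₃,₃` at `u` puts their voltages `h, h⁻¹a, h⁻¹b, hc` into it, and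
these generate `K` since every element is `hᵗ` times a translation, an integer combination of
`a, b, c`. -/

namespace SimpleGraph

variable {B G : Type*} [Group G]

def IsLeftMulInvariant (Γ : SimpleGraph (B × G)) : Prop :=
  ∀ (k : G) {p q : B × G}, Γ.Adj p q → Γ.Adj (p.1, k * p.2) (q.1, k * q.2)

variable {Γ : SimpleGraph (B × G)}

lemma Reachable.leftMul (hΓ : Γ.IsLeftMulInvariant) (k : G) {p q : B × G}
    (h : Γ.Reachable p q) : Γ.Reachable (p.1, k * p.2) (q.1, k * q.2) :=
  h.map ⟨fun p => (p.1, k * p.2), hΓ k⟩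

def reachableSubgroup (hΓ : Γ.IsLeftMulInvariant) (b : B) : Subgroup G where
  carrier := {g | Γ.Reachable (b, 1) (b, g)}
  one_mem' := Reachable.refl _
  mul_mem' {s t} hs ht := hs.trans (by simpa using ht.leftMul hΓ s)
  inv_mem' {s} hs := (by simpa using hs.leftMul hΓ s⁻¹ : Γ.Reachable (b, s⁻¹) (b, 1)).symm

lemma connected_of_reachableSubgroup_eq_top (hΓ : Γ.IsLeftMulInvariant) (b : B)
    (hfibre : ∀ b', Γ.Reachable (b, 1) (b', 1)) (htop : reachableSubgroup hΓ b = ⊤) :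
    Γ.Connected := by
  have hbase : ∀ p : B × G, Γ.Reachable (b, 1) p := fun ⟨b', g⟩ => by
    have hg : g ∈ reachableSubgroup hΓ b := by rw [htop]; exact Subgroup.mem_top g
    have hg' := (hfibre b').leftMul hΓ g
    simp only [mul_one] at hg'
    exact hg.trans hg'
  have : Nonempty (B × G) := ⟨(b, 1)⟩
  exact ⟨fun p q => (hbase p).symm.trans (hbase q)⟩

end SimpleGraph

namespace Kgrp

variable {n : ℕ} {r : ZMod n} {hr : r ^ 2 + r + 1 = 0}

def translationPart (H : Subgroup (Kgrp n r hr)) : AddSubgroup (ZMod n × ZMod n × ZMod n) where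
  carrier := {v | (⟨v, 0⟩ : Kgrp n r hr) ∈ H}
  add_mem' hv hw := by simpa using H.mul_mem hv hw
  zero_mem' := H.one_mem
  neg_mem' hv := by simpa using H.inv_mem hv

lemma genh_pow (m : ℕ) : genh n r hr ^ m = ⟨0, m⟩ := by
  induction m with
  | zero => rfl
  | succ m ih => rw [pow_succ, ih, genh, mul_def]; simp

lemma eq_top_of_gens_mem {H : Subgroup (Kgrp n r hr)} (ha : gena n r hr ∈ H)
    (hb : genb n r hr ∈ H) (hc : genc n r hr ∈ H) (hh : genh n r hr ∈ H) : H = ⊤ := by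
  have ha' : (1, 0, 0) ∈ translationPart H := ha
  have hb' : (0, 1, 0) ∈ translationPart H := hb
  have hc' : (0, 0, 1) ∈ translationPart H := hc
  have htrans : ∀ v, v ∈ translationPart H := fun ⟨x, y, z⟩ => by
    obtain ⟨i, rfl⟩ := ZMod.intCast_surjective x
    obtain ⟨j, rfl⟩ := ZMod.intCast_surjective y
    obtain ⟨k, rfl⟩ := ZMod.intCast_surjective z
    have hv : ((i : ZMod n), (j : ZMod n), (k : ZMod n)) =
        i • ((1, 0, 0) : ZMod n × ZMod n × ZMod n) + j • (0, 1, 0) + k • (0, 0, 1) := by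
      ext <;> simp
    rw [hv]
    exact add_mem (add_mem (zsmul_mem ha' i) (zsmul_mem hb' j)) (zsmul_mem hc' k)
  refine eq_top_iff.2 fun ⟨v, t⟩ _ => ?_
  have hg : (⟨v, t⟩ : Kgrp n r hr) = genh n r hr ^ t.val * ⟨v, 0⟩ := by
    rw [genh_pow]; ext <;> simp
  exact hg ▸ H.mul_mem (H.pow_mem hh _) (htrans v)

lemma closure_voltages_eq_top :
    Subgroup.closure {genh n r hr, (genh n r hr)⁻¹ * gena n r hr,
      (genh n r hr)⁻¹ * genb n r hr, genh n r hr * genc n r hr} = ⊤ := by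
  set S : Set (Kgrp n r hr) := {genh n r hr, (genh n r hr)⁻¹ * gena n r hr,
      (genh n r hr)⁻¹ * genb n r hr, genh n r hr * genc n r hr}
  have hh : genh n r hr ∈ Subgroup.closure S := Subgroup.subset_closure (Set.mem_insert _ _)
  have ha : (genh n r hr)⁻¹ * gena n r hr ∈ Subgroup.closure S :=
    Subgroup.subset_closure (Set.mem_insert_of_mem _ (Set.mem_insert _ _))
  have hb : (genh n r hr)⁻¹ * genb n r hr ∈ Subgroup.closure S :=
    Subgroup.subset_closure (Set.mem_insert_of_mem _ (Set.mem_insert_of_mem _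
      (Set.mem_insert _ _)))
  have hc : genh n r hr * genc n r hr ∈ Subgroup.closure S :=
    Subgroup.subset_closure (Set.mem_insert_of_mem _ (Set.mem_insert_of_mem _
      (Set.mem_insert_of_mem _ (Set.mem_singleton _))))
  refine eq_top_of_gens_mem ?_ ?_ ?_ hh
  · simpa only [mul_inv_cancel_left] using mul_mem hh ha
  · simpa only [mul_inv_cancel_left] using mul_mem hh hb
  · simpa only [inv_mul_cancel_left] using mul_mem (inv_mem hh) hc

end Kgrp

namespace NCG

open SimpleGraph Kgrp

variable {n : ℕ} {r : ZMod n} {hr : r ^ 2 + r + 1 = 0}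

lemma isLeftMulInvariant : (NCG n r hr).IsLeftMulInvariant := by
  have hrel : ∀ (k : Kgrp n r hr) {p q : B6 × Kgrp n r hr}, ncgRel n r hr p q →
      ncgRel n r hr (p.1, k * p.2) (q.1, k * q.2) := by
    rintro k ⟨pb, pg⟩ ⟨qb, qg⟩ h
    cases pb <;> cases qb <;> (try exact h.elim) <;>
      (replace h : qg = _ := h; subst h; first | rfl | exact (mul_assoc _ _ _).symm)
  exact fun k _ _ h => h.imp (hrel k) (hrel k)

lemma reachable_fibre (b : B6) : (NCG n r hr).Reachable (.u, 1) (b, 1) := by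
  have hy : (NCG n r hr).Reachable (.u, 1) (.y, 1) := Adj.reachable (Or.inl rfl)
  have hz : (NCG n r hr).Reachable (.u, 1) (.z, 1) := Adj.reachable (Or.inl rfl)
  cases b with
  | u => rfl
  | x => exact Adj.reachable (Or.inl rfl)
  | y => exact hy
  | z => exact hz
  | v => exact hy.trans (Adj.reachable (Or.inr rfl))
  | w => exact hz.trans (Adj.reachable (Or.inr rfl))

/-- The closed walk `u – β – γ – δ – u` of `K₃,₃` lifts to a walk from `(u, 1)` to `(u, g)`,
where `g` is the voltage of its only cotree arc `γ → δ`. -/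
lemma voltage_mem {β γ δ : B6} {g : Kgrp n r hr} (h₁ : ncgRel n r hr (.u, 1) (β, 1))
    (h₂ : ncgRel n r hr (γ, 1) (β, 1)) (h₃ : ncgRel n r hr (γ, 1) (δ, g))
    (h₄ : ncgRel n r hr (.u, g) (δ, g)) : g ∈ reachableSubgroup isLeftMulInvariant B6.u := by
  have e₁ : (NCG n r hr).Adj (.u, 1) (β, 1) := Or.inl h₁
  have e₂ : (NCG n r hr).Adj (β, 1) (γ, 1) := Or.inr h₂
  have e₃ : (NCG n r hr).Adj (γ, 1) (δ, g) := Or.inl h₃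
  have e₄ : (NCG n r hr).Adj (δ, g) (.u, g) := Or.inr h₄
  exact e₁.reachable.trans (e₂.reachable.trans (e₃.reachable.trans e₄.reachable))

lemma reachableSubgroup_eq_top : reachableSubgroup (isLeftMulInvariant (hr := hr)) B6.u = ⊤ := by
  refine eq_top_iff.2 (closure_voltages_eq_top.symm.trans_le ((Subgroup.closure_le _).2 ?_))
  simp only [Set.insert_subset_iff, Set.singleton_subset_iff]
  exact ⟨voltage_mem (β := .y) (γ := .v) (δ := .z) rfl rfl (one_mul _).symm rfl,
    voltage_mem (β := .z) (γ := .w) (δ := .x) rfl rfl (one_mul _).symm rfl,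
    voltage_mem (β := .y) (γ := .v) (δ := .x) rfl rfl (one_mul _).symm rfl,
    voltage_mem (β := .z) (γ := .w) (δ := .y) rfl rfl (one_mul _).symm rfl⟩

end NCG

theorem stmt13_general (n : ℕ) (r : ZMod n) (hr : r ^ 2 + r + 1 = 0) :
    (NCG n r hr).Connected :=
  SimpleGraph.connected_of_reachableSubgroup_eq_top NCG.isLeftMulInvariant B6.u
    NCG.reachable_fibre NCG.reachableSubgroup_eq_top

/-- The graph `NCG(18n³)` is connected. -/
theorem stmt13 (n : ℕ) (hn : 7 ≤ n) (r : ZMod n) (hr : r ^ 2 + r + 1 = 0) :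
    (NCG n r hr).Connected :=
  stmt13_general n r hr
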